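/- Fix $d \geq 1$, let $\omega = e^{2\pi i/d}$, let $\{e_k\}_{k=0}^{d-1}$ be the standard basis of $\mathbb{C}^d$ and $f_\ell = \tfrac{1}{\sqrt{d}} \sum_{k=0}^{d-1} \omega^{k\ell} e_k$ the Fourier basis. Let Bob's characterized measurements be the projectors $M_{k|0} = e_k e_k^{\dagger}$ and $M_{\ell|1} = f_\ell f_\ell^{\dagger}$. Consider any local-hidden-state model: a finite set $\Lambda$, a probability distribution $q$ on $\Lambda$, density matrices $\rho_\lambda$ on $\mathbb{C}^d$ (positive semidefinite, trace one), and response functions $p(a|x,\lambda) \geq 0$ with $\sum_{a=0}^{d-1} p(a|x,\lambda) = 1$ for each $x \in \{0,1\}$ and $\lambda$. Then the steering functional $\beta_d := \sum_{x \in \{0,1\}} \sum_{a=0}^{d-1} \sum_{\lambda \in \Lambda} q(\lambda)\, p(a|x,\lambda)\, \mathrm{Tr}[M_{a|x}\, \rho_\lambda]$ satisfies $\beta_d \leq \beta_{lhs} := 1 + \tfrac{1}{\sqrt{d}}$. -/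

import Mathlib

/-!
For unit vectors `u`, `v` and any `x`, `|⟪u, x⟫|² + |⟪v, x⟫|² ≤ (1 + |⟪u, v⟫|) ‖x‖²`: test `x`
against `z = ⟪u, x⟫ u + ⟪v, x⟫ v` with Cauchy–Schwarz. Writing a density matrix as
`ρ = ∑ᵢ wᵢ wᵢ†`, this gives `Tr(P_u ρ) + Tr(P_v ρ) ≤ 1 + |⟪u, v⟫|` for the rank-one projectors.
Each computational basis vector overlaps each Fourier basis vector in exactly `1/√d`, and `β_d`
is a convex combination of such pair sums (over Alice's responses for each `λ`, then over `λ`).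
-/

open Matrix
open scoped ComplexOrder InnerProductSpace
open RCLike WithLp

section InnerProduct

variable {𝕜 E : Type*} [RCLike 𝕜] [NormedAddCommGroup E] [InnerProductSpace 𝕜 E]

theorem norm_inner_sq_add_norm_inner_sq_le {u v : E} (hu : ‖u‖ = 1) (hv : ‖v‖ = 1) (x : E) :
    ‖⟪u, x⟫_𝕜‖ ^ 2 + ‖⟪v, x⟫_𝕜‖ ^ 2 ≤ (1 + ‖⟪u, v⟫_𝕜‖) * ‖x‖ ^ 2 := by
  set α := ⟪u, x⟫_𝕜
  set β := ⟪v, x⟫_𝕜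
  set g := ‖⟪u, v⟫_𝕜‖
  set S := ‖α‖ ^ 2 + ‖β‖ ^ 2
  set z := α • u + β • v
  have hzx : ⟪z, x⟫_𝕜 = (S : 𝕜) := by
    rw [inner_add_left, inner_smul_left, inner_smul_left, RCLike.conj_mul, RCLike.conj_mul]
    simp only [S, RCLike.ofReal_add, RCLike.ofReal_pow]
  have hcross : re ⟪α • u, β • v⟫_𝕜 ≤ ‖α‖ * ‖β‖ * g :=
    calc re ⟪α • u, β • v⟫_𝕜 ≤ ‖⟪α • u, β • v⟫_𝕜‖ := re_le_norm _
      _ = ‖α‖ * ‖β‖ * g := by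
        simp only [inner_smul_left, inner_smul_right, norm_mul, RCLike.norm_conj, g]; ring
  have hz : ‖z‖ ^ 2 ≤ S * (1 + g) := by
    have := norm_add_sq (𝕜 := 𝕜) (α • u) (β • v)
    simp only [norm_smul, hu, hv, mul_one] at this
    nlinarith [sq_nonneg (‖α‖ - ‖β‖), norm_nonneg ⟪u, v⟫_𝕜]
  have hS : S ≤ ‖z‖ * ‖x‖ := by
    have := norm_inner_le_norm (𝕜 := 𝕜) z x
    rwa [hzx, RCLike.norm_ofReal, abs_of_nonneg (by positivity)] at this
  rcases (show 0 ≤ S by positivity).eq_or_lt with hS0 | hS0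
  · rw [← hS0]; positivity
  refine le_of_mul_le_mul_left ?_ hS0
  calc S * S ≤ ‖z‖ ^ 2 * ‖x‖ ^ 2 := by nlinarith
    _ ≤ S * (1 + g) * ‖x‖ ^ 2 := by gcongr
    _ = S * ((1 + g) * ‖x‖ ^ 2) := by ring

end InnerProduct

namespace Matrix

variable {𝕜 n : Type*} [RCLike 𝕜] [Fintype n]

theorem trace_vecMulVec_self_star (w : n → 𝕜) :
    (vecMulVec w (star w)).trace = (‖toLp 2 w‖ : 𝕜) ^ 2 := by
  rw [trace_vecMulVec, ← inner_self_eq_norm_sq_to_K]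
  rfl

theorem trace_vecMulVec_mul_vecMulVec (u w : n → 𝕜) :
    (vecMulVec u (star u) * vecMulVec w (star w)).trace = (‖⟪toLp 2 u, toLp 2 w⟫_𝕜‖ : 𝕜) ^ 2 := by
  rw [← RCLike.mul_conj, vecMulVec_mul_vecMulVec, trace_vecMulVec, dotProduct_smul, smul_eq_mul,
    EuclideanSpace.inner_toLp_toLp, starRingEnd_apply, ← star_dotProduct_star, star_star,
    dotProduct_comm w]

theorem re_trace_vecMulVec_mul_add_le {u v : n → 𝕜} (hu : ‖toLp 2 u‖ = 1) (hv : ‖toLp 2 v‖ = 1)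
    {ρ : Matrix n n 𝕜} (hρ : ρ.PosSemidef) :
    re (vecMulVec u (star u) * ρ).trace + re (vecMulVec v (star v) * ρ).trace ≤
      (1 + ‖⟪toLp 2 u, toLp 2 v⟫_𝕜‖) * re ρ.trace := by
  obtain ⟨m, w, rfl⟩ := posSemidef_iff_eq_sum_vecMulVec.mp hρ
  simp only [Finset.mul_sum, trace_sum, map_sum, trace_vecMulVec_mul_vecMulVec,
    trace_vecMulVec_self_star, ← RCLike.ofReal_pow, RCLike.ofReal_re, ← Finset.sum_add_distrib]
  exact Finset.sum_le_sum fun i _ => norm_inner_sq_add_norm_inner_sq_le hu hv _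

end Matrix

theorem norm_toLp_eq_one_of_forall_norm_eq {𝕜 n : Type*} [RCLike 𝕜] [Fintype n] [Nonempty n]
    {x : n → 𝕜} (hx : ∀ k, ‖x k‖ = 1 / √(Fintype.card n)) : ‖toLp 2 x‖ = 1 := by
  have hcard : (0 : ℝ) < Fintype.card n := by exact_mod_cast Fintype.card_pos
  rw [EuclideanSpace.norm_eq, Real.sqrt_eq_one]
  simp only [hx, div_pow, one_pow, Real.sq_sqrt hcard.le, Finset.sum_const, Finset.card_univ,
    nsmul_eq_mul]
  field_simp

section Averaging

variable {ι κ : Type*} [Fintype ι] [Fintype κ]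

theorem sum_mul_le_of_forall_le {p t : ι → ℝ} {K : ℝ} (hp : ∀ i, 0 ≤ p i) (hp1 : ∑ i, p i = 1)
    (ht : ∀ i, t i ≤ K) : ∑ i, p i * t i ≤ K :=
  calc ∑ i, p i * t i ≤ ∑ i, p i * K :=
        Finset.sum_le_sum fun i _ => mul_le_mul_of_nonneg_left (ht i) (hp i)
    _ = K := by rw [← Finset.sum_mul, hp1, one_mul]

theorem sum_mul_add_sum_mul_le {p : ι → ℝ} {p' : κ → ℝ} {t : ι → ℝ} {s : κ → ℝ} {C : ℝ}
    (hp : ∀ i, 0 ≤ p i) (hp1 : ∑ i, p i = 1) (hp' : ∀ j, 0 ≤ p' j) (hp'1 : ∑ j, p' j = 1)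
    (hts : ∀ i j, t i + s j ≤ C) : ∑ i, p i * t i + ∑ j, p' j * s j ≤ C := by
  have hs : ∀ j, s j ≤ C - ∑ i, p i * t i := fun j => by
    have := sum_mul_le_of_forall_le hp hp1 fun i => le_sub_iff_add_le.mpr (hts i j)
    linarith
  linarith [sum_mul_le_of_forall_le hp' hp'1 hs]

end Averaging

/-- Local-hidden-state bound for the multidimensional steering functional: for Bob's
characterized projective measurements in the computational basis `{e_k}` and the
Fourier basis `{f_ℓ}` of `ℂᵈ`, every local-hidden-state model (hidden variable `λ` with
distribution `q`, hidden density matrices `ρ_λ`, response functions `p(a|x,λ)`)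
satisfies `β_d = ∑_{x,a,λ} q(λ) p(a|x,λ) Tr[M_{a|x} ρ_λ] ≤ 1 + 1/√d`. -/
theorem steering_lhs_bound (d : ℕ) (hd : 1 ≤ d)
    (Λ : Type) [Fintype Λ]
    (q : Λ → ℝ) (hq : ∀ l, 0 ≤ q l) (hqsum : ∑ l, q l = 1)
    (ρ : Λ → Matrix (Fin d) (Fin d) ℂ)
    (hρpos : ∀ l, (ρ l).PosSemidef) (hρtr : ∀ l, (ρ l).trace = 1)
    (pr : Fin d → Fin 2 → Λ → ℝ)
    (hpr : ∀ a x l, 0 ≤ pr a x l) (hprsum : ∀ x l, ∑ a, pr a x l = 1) :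
    let ω : ℂ := Complex.exp (2 * (Real.pi : ℂ) * Complex.I / d)
    let e : Fin d → Fin d → ℂ := fun k => Pi.single k 1
    let f : Fin d → Fin d → ℂ := fun ℓ k => ω ^ (k.val * ℓ.val) / (Real.sqrt d : ℂ)
    let M : Fin 2 → Fin d → Matrix (Fin d) (Fin d) ℂ :=
      ![fun k => vecMulVec (e k) (star (e k)), fun ℓ => vecMulVec (f ℓ) (star (f ℓ))]
    (∑ x : Fin 2, ∑ a : Fin d, ∑ l : Λ,
        q l * pr a x l * ((M x a * ρ l).trace).re) ≤ 1 + 1 / Real.sqrt d := by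
  intro ω e f M
  have hω : ‖ω‖ = 1 := by
    change ‖Complex.exp _‖ = 1
    rw [show 2 * (Real.pi : ℂ) * Complex.I / d = ((2 * Real.pi / d : ℝ) : ℂ) * Complex.I by
      push_cast; ring]
    exact Complex.norm_exp_ofReal_mul_I _
  have hf_entry : ∀ ℓ k, ‖f ℓ k‖ = 1 / √d := fun ℓ k => by
    simp only [f, norm_div, norm_pow, hω, one_pow, Complex.norm_real, Real.norm_eq_abs,
      abs_of_nonneg (Real.sqrt_nonneg _)]
  have he : ∀ k, ‖toLp 2 (e k)‖ = 1 := fun k => by simp [e]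
  have : NeZero d := .of_pos hd
  have hf : ∀ ℓ, ‖toLp 2 (f ℓ)‖ = 1 := fun ℓ =>
    norm_toLp_eq_one_of_forall_norm_eq (by simpa only [Fintype.card_fin] using hf_entry ℓ)
  have hef : ∀ k ℓ, ‖⟪toLp 2 (e k), toLp 2 (f ℓ)⟫_ℂ‖ = 1 / √d := fun k ℓ => by
    rw [← hf_entry ℓ k]
    change ‖⟪EuclideanSpace.single k 1, _⟫_ℂ‖ = _
    rw [EuclideanSpace.inner_single_left, map_one, one_mul]
  have hpair : ∀ l k ℓ, (M 0 k * ρ l).trace.re + (M 1 ℓ * ρ l).trace.re ≤ 1 + 1 / √d :=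
    fun l k ℓ =>
      (re_trace_vecMulVec_mul_add_le (he k) (hf ℓ) (hρpos l)).trans_eq (by
        rw [hρtr l, hef k ℓ, RCLike.one_re, mul_one])
  calc ∑ x : Fin 2, ∑ a, ∑ l, q l * pr a x l * (M x a * ρ l).trace.re
      = ∑ l, q l * (∑ a, pr a 0 l * (M 0 a * ρ l).trace.re
          + ∑ b, pr b 1 l * (M 1 b * ρ l).trace.re) := by
        rw [Fin.sum_univ_two, Finset.sum_comm, Finset.sum_comm (γ := Fin d),
          ← Finset.sum_add_distrib]
        simp only [Finset.mul_sum, mul_add, mul_assoc]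
    _ ≤ 1 + 1 / √d := sum_mul_le_of_forall_le hq hqsum fun l =>
        sum_mul_add_sum_mul_le (hpr · 0 l) (hprsum 0 l) (hpr · 1 l) (hprsum 1 l) (hpair l)
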